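/- arXiv:1008.3448 — 2 statements merged into one kernel-verified Lean document; each statement's English description precedes it below -/
import Mathlib

section
/- Let R be a semihyperring with a multiplicative identity 1 and let I be a proper hyperideal of R. Then I is a prime hyperideal if and only if the complement R \ I is an m-system, i.e., for all a, b ∈ R \ I there exists r ∈ R such that a·r·b ∈ R \ I. -/
/-- A semihyperring `(R, +, ·, 0)`: `+` is a hyperoperation (into nonempty sets),
`·` is an associative single-valued multiplication distributing over `+`,
and `0` is an additive identity and multiplicative absorbing element. -/
class Semihyperring (R : Type*) extends Mul R, Zero R where
  /-- hyperaddition -/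
  hadd : R → R → Set R
  hadd_nonempty : ∀ a b : R, (hadd a b).Nonempty
  hadd_comm : ∀ a b : R, hadd a b = hadd b a
  hadd_assoc : ∀ a b c : R, (⋃ x ∈ hadd a b, hadd x c) = ⋃ x ∈ hadd b c, hadd a x
  hadd_zero : ∀ a : R, hadd a 0 = {a}
  mul_assoc' : ∀ a b c : R, a * b * c = a * (b * c)
  left_distrib' : ∀ a b c : R, (fun x => a * x) '' hadd b c = hadd (a * b) (a * c)
  right_distrib' : ∀ a b c : R, (fun x => x * c) '' hadd a b = hadd (a * c) (b * c)
  mul_zero' : ∀ a : R, a * 0 = 0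
  zero_mul' : ∀ a : R, 0 * a = 0

namespace Semihyperring

variable {R : Type*} [Semihyperring R]

/-- Hyperaddition extended to sets: `A + B = ⋃_{a∈A, b∈B} (a + b)`. -/
def hAddSet (A B : Set R) : Set R := ⋃ a ∈ A, ⋃ b ∈ B, hadd a b

/-- The hypersum `x₁ + x₂ + ⋯ + xₙ` of a list of elements (as a set);
the empty hypersum is `{0}`, so `hSum [x] = {x}`. -/
def hSum : List R → Set R
  | [] => {0}
  | x :: xs => hAddSet {x} (hSum xs)

/-- A left hyperideal. -/
def IsLeftHyperideal (I : Set R) : Prop :=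
  I.Nonempty ∧ (∀ a ∈ I, ∀ b ∈ I, hadd a b ⊆ I) ∧ ∀ a ∈ I, ∀ r : R, r * a ∈ I

/-- A right hyperideal. -/
def IsRightHyperideal (I : Set R) : Prop :=
  I.Nonempty ∧ (∀ a ∈ I, ∀ b ∈ I, hadd a b ⊆ I) ∧ ∀ a ∈ I, ∀ r : R, a * r ∈ I

/-- A (two-sided) hyperideal. -/
def IsHyperideal (I : Set R) : Prop :=
  I.Nonempty ∧ (∀ a ∈ I, ∀ b ∈ I, hadd a b ⊆ I) ∧ ∀ a ∈ I, ∀ r : R, r * a ∈ I ∧ a * r ∈ I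

/-- The product `HK`: union of all finite hypersums `a₁·b₁ + ⋯ + aₙ·bₙ` (n ≥ 1)
with `aᵢ ∈ H`, `bᵢ ∈ K`. -/
def hProd (H K : Set R) : Set R :=
  ⋃ (l : List (R × R)) (_ : l ≠ []) (_ : ∀ p ∈ l, p.1 ∈ H ∧ p.2 ∈ K),
    hSum (l.map fun p => p.1 * p.2)

/-- The hyperideal generated by an element. -/
def genHyperideal (a : R) : Set R := ⋂₀ {I : Set R | IsHyperideal I ∧ a ∈ I}

/-- A prime hyperideal. -/
def IsPrimeHyperideal (P : Set R) : Prop :=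
  IsHyperideal P ∧
    ∀ A B : Set R, IsHyperideal A → IsHyperideal B → hProd A B ⊆ P → A ⊆ P ∨ B ⊆ P

/-- A semiprime hyperideal. -/
def IsSemiprimeHyperideal (I : Set R) : Prop :=
  IsHyperideal I ∧ ∀ H : Set R, IsHyperideal H → hProd H H ⊆ I → H ⊆ I

/-- A strongly irreducible hyperideal. -/
def IsStronglyIrreducibleHyperideal (I : Set R) : Prop :=
  IsHyperideal I ∧
    ∀ H K : Set R, IsHyperideal H → IsHyperideal K → H ∩ K ⊆ I → H ⊆ I ∨ K ⊆ I

/-- An irreducible hyperideal. -/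
def IsIrreducibleHyperideal (I : Set R) : Prop :=
  IsHyperideal I ∧
    ∀ H K : Set R, IsHyperideal H → IsHyperideal K → I = H ∩ K → I = H ∨ I = K

/-- `a·R`: the union of all finite hypersums `a·r₁ + ⋯ + a·rₙ` (n ≥ 1) with `rᵢ ∈ R`. -/
def rightMulSet (a : R) : Set R :=
  ⋃ (l : List R) (_ : l ≠ []), hSum (l.map fun r => a * r)

lemma hadd_subset_hAddSet {A B : Set R} {x y : R} (hx : x ∈ A) (hy : y ∈ B) :
    hadd x y ⊆ hAddSet A B := fun z hz => by
  simp only [hAddSet, Set.mem_iUnion]; exact ⟨x, hx, y, hy, hz⟩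

lemma hAddSet_subset {A B C : Set R} (h : ∀ x ∈ A, ∀ y ∈ B, hadd x y ⊆ C) :
    hAddSet A B ⊆ C := by
  intro z hz
  simp only [hAddSet, Set.mem_iUnion] at hz
  obtain ⟨a, ha, b, hb, hz⟩ := hz
  exact h a ha b hb hz

lemma hAddSet_assoc (A B C : Set R) :
    hAddSet (hAddSet A B) C = hAddSet A (hAddSet B C) := by
  ext z
  simp only [hAddSet, Set.mem_iUnion]
  constructor
  · rintro ⟨w, ⟨a, ha, b, hb, hw⟩, c, hc, hz⟩
    have h1 : z ∈ ⋃ x ∈ hadd a b, hadd x c := Set.mem_biUnion hw hz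
    rw [hadd_assoc] at h1
    obtain ⟨x, hx, hz'⟩ := Set.mem_iUnion₂.mp h1
    exact ⟨a, ha, x, ⟨b, hb, c, hc, hx⟩, hz'⟩
  · rintro ⟨a, ha, x, ⟨b, hb, c, hc, hx⟩, hz⟩
    have h1 : z ∈ ⋃ x ∈ hadd b c, hadd a x := Set.mem_biUnion hx hz
    rw [← hadd_assoc] at h1
    obtain ⟨w, hw, hz'⟩ := Set.mem_iUnion₂.mp h1
    exact ⟨w, ⟨a, ha, b, hb, hw⟩, c, hc, hz'⟩

lemma zero_hAddSet (S : Set R) : hAddSet ({0} : Set R) S = S := by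
  ext z
  simp only [hAddSet, Set.mem_iUnion, Set.mem_singleton_iff]
  constructor
  · rintro ⟨a, rfl, b, hb, hz⟩
    rw [hadd_comm, hadd_zero] at hz
    exact Set.mem_singleton_iff.mp hz ▸ hb
  · intro hz
    refine ⟨0, rfl, z, hz, ?_⟩
    rw [hadd_comm, hadd_zero]
    rfl

lemma hSum_cons (x : R) (xs : List R) : hSum (x :: xs) = hAddSet {x} (hSum xs) := rfl

lemma hSum_singleton (x : R) : hSum [x] = ({x} : Set R) := by
  rw [hSum_cons]
  show hAddSet {x} ({0} : Set R) = {x}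
  ext z
  simp only [hAddSet, Set.mem_iUnion, Set.mem_singleton_iff]
  constructor
  · rintro ⟨a, rfl, b, rfl, hz⟩
    rw [hadd_zero] at hz
    exact hz
  · rintro rfl
    exact ⟨z, rfl, 0, rfl, by rw [hadd_zero]; rfl⟩

lemma hSum_append (L₁ L₂ : List R) :
    hSum (L₁ ++ L₂) = hAddSet (hSum L₁) (hSum L₂) := by
  induction L₁ with
  | nil =>
    simp only [List.nil_append]
    rw [show hSum ([] : List R) = {0} from rfl, zero_hAddSet]
  | cons x xs ih =>
    simp only [List.cons_append, hSum_cons, ih, hAddSet_assoc]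

lemma image_mul_left_hAddSet (r : R) (A B : Set R) :
    (fun x => r * x) '' hAddSet A B =
      hAddSet ((fun x => r * x) '' A) ((fun x => r * x) '' B) := by
  ext z
  simp only [hAddSet, Set.mem_image, Set.mem_iUnion]
  constructor
  · rintro ⟨w, ⟨a, ha, b, hb, hw⟩, rfl⟩
    refine ⟨r * a, ⟨a, ha, rfl⟩, r * b, ⟨b, hb, rfl⟩, ?_⟩
    rw [← left_distrib']
    exact ⟨w, hw, rfl⟩
  · rintro ⟨_, ⟨a, ha, rfl⟩, _, ⟨b, hb, rfl⟩, hz⟩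
    rw [← left_distrib'] at hz
    obtain ⟨w, hw, hzw⟩ := hz
    exact ⟨w, ⟨a, ha, b, hb, hw⟩, hzw⟩

lemma image_mul_right_hAddSet (r : R) (A B : Set R) :
    (fun x => x * r) '' hAddSet A B =
      hAddSet ((fun x => x * r) '' A) ((fun x => x * r) '' B) := by
  ext z
  simp only [hAddSet, Set.mem_image, Set.mem_iUnion]
  constructor
  · rintro ⟨w, ⟨a, ha, b, hb, hw⟩, rfl⟩
    refine ⟨a * r, ⟨a, ha, rfl⟩, b * r, ⟨b, hb, rfl⟩, ?_⟩
    rw [← right_distrib']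
    exact ⟨w, hw, rfl⟩
  · rintro ⟨_, ⟨a, ha, rfl⟩, _, ⟨b, hb, rfl⟩, hz⟩
    rw [← right_distrib'] at hz
    obtain ⟨w, hw, hzw⟩ := hz
    exact ⟨w, ⟨a, ha, b, hb, hw⟩, hzw⟩

lemma image_mul_left_hSum (r : R) (L : List R) :
    (fun x => r * x) '' hSum L = hSum (L.map fun x => r * x) := by
  induction L with
  | nil =>
    show (fun x => r * x) '' {0} = ({0} : Set R)
    rw [Set.image_singleton]
    simp [mul_zero']
  | cons x xs ih =>
    rw [List.map_cons, hSum_cons, hSum_cons, image_mul_left_hAddSet, ih,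
      Set.image_singleton]

lemma image_mul_right_hSum (r : R) (L : List R) :
    (fun x => x * r) '' hSum L = hSum (L.map fun x => x * r) := by
  induction L with
  | nil =>
    show (fun x => x * r) '' {0} = ({0} : Set R)
    rw [Set.image_singleton]
    simp [zero_mul']
  | cons x xs ih =>
    rw [List.map_cons, hSum_cons, hSum_cons, image_mul_right_hAddSet, ih,
      Set.image_singleton]

lemma mul_left_mem_hSum {L : List R} {x : R} (r : R) (hx : x ∈ hSum L) :
    r * x ∈ hSum (L.map fun y => r * y) := by
  rw [← image_mul_left_hSum]
  exact ⟨x, hx, rfl⟩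

lemma mul_right_mem_hSum {L : List R} {x : R} (r : R) (hx : x ∈ hSum L) :
    x * r ∈ hSum (L.map fun y => y * r) := by
  rw [← image_mul_right_hSum]
  exact ⟨x, hx, rfl⟩

lemma hSum_subset {I : Set R} (hclosed : ∀ a ∈ I, ∀ b ∈ I, hadd a b ⊆ I) :
    ∀ L : List R, L ≠ [] → (∀ x ∈ L, x ∈ I) → hSum L ⊆ I := by
  intro L
  induction L with
  | nil => intro h; exact absurd rfl h
  | cons x xs ih =>
    intro _ hmem
    rcases eq_or_ne xs [] with rfl | hne
    · rw [hSum_singleton]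
      exact Set.singleton_subset_iff.mpr (hmem x (by simp))
    · have hxs := ih hne (fun y hy => hmem y (List.mem_cons_of_mem _ hy))
      rw [hSum_cons]
      refine hAddSet_subset ?_
      rintro a ha b hb
      rw [Set.mem_singleton_iff] at ha
      subst ha
      exact hclosed a (hmem a (by simp)) b (hxs hb)

/-- The set of all finite hypersums of terms `r·a·s`. -/
def genSet (a : R) : Set R :=
  {x | ∃ l : List (R × R), l ≠ [] ∧ x ∈ hSum (l.map fun p => p.1 * a * p.2)}

lemma genSet_isHyperideal (a : R) (one : R) (hone : ∀ x : R, one * x = x ∧ x * one = x) :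
    IsHyperideal (genSet a) := by
  refine ⟨⟨a, ⟨[(one, one)], by simp, ?_⟩⟩, ?_, ?_⟩
  · rw [List.map_singleton, hSum_singleton, (hone a).1, (hone a).2]
    rfl
  · rintro x ⟨l₁, hne₁, hx⟩ y ⟨l₂, hne₂, hy⟩ z hz
    refine ⟨l₁ ++ l₂, by simp [hne₁], ?_⟩
    rw [List.map_append, hSum_append]
    exact hadd_subset_hAddSet hx hy hz
  · rintro x ⟨l, hne, hx⟩ r
    constructor
    · refine ⟨l.map fun p => (r * p.1, p.2), by simpa using hne, ?_⟩
      have := mul_left_mem_hSum r hx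
      rw [List.map_map] at this ⊢
      convert this using 3
      funext p
      simp only [Function.comp]
      simp only [mul_assoc']
    · refine ⟨l.map fun p => (p.1, p.2 * r), by simpa using hne, ?_⟩
      have := mul_right_mem_hSum r hx
      rw [List.map_map] at this ⊢
      convert this using 3
      funext p
      simp only [Function.comp]
      simp only [mul_assoc']

lemma genSet_mul_mem {a b : R} {I : Set R} (hI : IsHyperideal I)
    (h : ∀ r : R, a * r * b ∈ I) {x y : R}
    (hx : x ∈ genSet a) (hy : y ∈ genSet b) : x * y ∈ I := by
  obtain ⟨l₁, hne₁, hx⟩ := hx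
  obtain ⟨l₂, hne₂, hy⟩ := hy
  -- first: for any single term c = p₁ * a * p₂, c * y ∈ I
  have key : ∀ p : R × R, (p.1 * a * p.2) * y ∈ I := by
    intro p
    have h1 := mul_left_mem_hSum (p.1 * a * p.2) hy
    refine hSum_subset hI.2.1 _ (by simpa using hne₂) ?_ h1
    intro z hz
    rw [List.map_map, List.mem_map] at hz
    obtain ⟨q, _, rfl⟩ := hz
    have hm : a * (p.2 * q.1) * b ∈ I := h (p.2 * q.1)
    have : p.1 * a * p.2 * (q.1 * b * q.2) = p.1 * (a * (p.2 * q.1) * b) * q.2 := by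
      simp only [mul_assoc']
    rw [Function.comp, this]
    exact ((hI.2.2 _ ((hI.2.2 _ hm _).1) q.2).2)
  have h2 := mul_right_mem_hSum y hx
  refine hSum_subset hI.2.1 _ (by simpa using hne₁) ?_ h2
  intro z hz
  rw [List.map_map, List.mem_map] at hz
  obtain ⟨p, _, rfl⟩ := hz
  exact key p

lemma mem_genSet_self (a : R) (one : R) (hone : ∀ x : R, one * x = x ∧ x * one = x) :
    a ∈ genSet a := by
  refine ⟨[(one, one)], by simp, ?_⟩
  rw [List.map_singleton, hSum_singleton, (hone a).1, (hone a).2]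
  rfl

end Semihyperring

open Semihyperring

/-- a proper hyperideal of a semihyperring with identity is prime iff
its complement is an m-system. -/
theorem prime_iff_compl_mSystem {R : Type*} [Semihyperring R]
    (one : R) (hone : ∀ x : R, one * x = x ∧ x * one = x)
    (I : Set R) (hI : IsHyperideal I) (hproper : I ≠ Set.univ) :
    IsPrimeHyperideal I ↔
      ∀ a b : R, a ∉ I → b ∉ I → ∃ r : R, a * r * b ∉ I := by
  constructor
  · intro hprime a b ha hb
    by_contra hcon
    push_neg at hcon
    have hsub : hProd (genSet a) (genSet b) ⊆ I := by
      intro z hz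
      simp only [hProd, Set.mem_iUnion] at hz
      obtain ⟨l, hne, hmem, hz⟩ := hz
      refine hSum_subset hI.2.1 _ (by simpa using hne) ?_ hz
      intro w hw
      rw [List.mem_map] at hw
      obtain ⟨p, hp, rfl⟩ := hw
      exact genSet_mul_mem hI hcon (hmem p hp).1 (hmem p hp).2
    rcases hprime.2 (genSet a) (genSet b)
        (genSet_isHyperideal a one hone) (genSet_isHyperideal b one hone) hsub with hA | hB
    · exact ha (hA (mem_genSet_self a one hone))
    · exact hb (hB (mem_genSet_self b one hone))
  · intro hm
    refine ⟨hI, ?_⟩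
    intro A B hA hB hAB
    by_contra hcon
    push_neg at hcon
    obtain ⟨⟨a, haA, haI⟩, ⟨b, hbB, hbI⟩⟩ :
        (∃ a ∈ A, a ∉ I) ∧ (∃ b ∈ B, b ∉ I) := by
      constructor
      · rcases Set.not_subset.mp hcon.1 with ⟨a, h1, h2⟩; exact ⟨a, h1, h2⟩
      · rcases Set.not_subset.mp hcon.2 with ⟨b, h1, h2⟩; exact ⟨b, h1, h2⟩
    obtain ⟨r, hr⟩ := hm a b haI hbI
    refine hr (hAB ?_)
    simp only [hProd, Set.mem_iUnion]
    refine ⟨[(a * r, b)], by simp, ?_, ?_⟩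
    · intro p hp
      rw [List.mem_singleton] at hp
      subst hp
      exact ⟨(hA.2.2 a haA r).2, hbB⟩
    · rw [List.map_singleton, hSum_singleton]
      rfl
end

section
/- Let R be a semihyperring with a multiplicative identity 1 and let I be a hyperideal of R. Then the following are equivalent: (1) I is a semiprime hyperideal; (2) for all a ∈ R: {a·r·a : r ∈ R} ⊆ I if and only if a ∈ I. -/
open Semihyperring

/-!
If every `a·r·a` lies in `I`, then the hyperideal `⟨a⟩` generated by `a` satisfies `⟨a⟩⟨a⟩ ⊆ I`:
the sets `{y | ∀ s, a·s·y ∈ I}` and `{x | ∀ s, x·s·y ∈ I}` are hyperideals; the first contains `a`,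
hence `⟨a⟩`, so for `y ∈ ⟨a⟩` the second contains `a`, hence `⟨a⟩`, and `s = 1` gives `x·y ∈ I`
for `x, y ∈ ⟨a⟩`. Semiprimality then puts `a ∈ I`. Conversely, if `H·H ⊆ I` and `x ∈ H`, every
`x·r·x = x·(r·x)` lies in `H·H ⊆ I`, so `x ∈ I`.
-/

namespace Semihyperring

variable {R : Type*} [Semihyperring R]

lemma mul_mem_hadd_left {u v z : R} (w : R) (hz : z ∈ hadd u v) : w * z ∈ hadd (w * u) (w * v) :=
  left_distrib' w u v ▸ Set.mem_image_of_mem _ hz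

lemma mul_mem_hadd_right {u v z : R} (w : R) (hz : z ∈ hadd u v) : z * w ∈ hadd (u * w) (v * w) :=
  right_distrib' u v w ▸ Set.mem_image_of_mem _ hz

namespace IsHyperideal

variable {I : Set R}

lemma zero_mem (hI : IsHyperideal I) : (0 : R) ∈ I := by
  obtain ⟨a, ha⟩ := hI.1
  simpa only [mul_zero'] using (hI.2.2 a ha 0).2

lemma hSum_subset (hI : IsHyperideal I) {L : List R} (hL : ∀ x ∈ L, x ∈ I) : hSum L ⊆ I := by
  induction L with
  | nil => simpa [hSum] using hI.zero_mem
  | cons x xs ih =>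
    intro z hz
    simp only [hSum, hAddSet, Set.mem_iUnion, Set.mem_singleton_iff] at hz
    obtain ⟨x', rfl, y, hy, hz⟩ := hz
    exact hI.2.1 x' (hL x' List.mem_cons_self) y
      (ih (fun w hw => hL w (List.mem_cons_of_mem _ hw)) hy) hz

lemma hProd_subset (hI : IsHyperideal I) {H K : Set R} (h : ∀ x ∈ H, ∀ y ∈ K, x * y ∈ I) :
    hProd H K ⊆ I := by
  intro z hz
  simp only [hProd, Set.mem_iUnion] at hz
  obtain ⟨l, -, hl, hz⟩ := hz
  refine hI.hSum_subset (fun q hq => ?_) hz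
  obtain ⟨p, hp, rfl⟩ := List.mem_map.1 hq
  exact h _ (hl p hp).1 _ (hl p hp).2

lemma setOf_mul_mul_left (hI : IsHyperideal I) (b : R) :
    IsHyperideal {x | ∀ s, b * s * x ∈ I} := by
  refine ⟨⟨0, fun s => by simpa only [mul_zero'] using hI.zero_mem⟩, ?_, fun x hx r => ⟨?_, ?_⟩⟩
  · intro x hx y hy z hz s
    exact hI.2.1 _ (hx s) _ (hy s) (mul_mem_hadd_left _ hz)
  · intro s
    simpa only [mul_assoc'] using hx (s * r)
  · intro s
    simpa only [mul_assoc'] using (hI.2.2 _ (hx s) r).2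

lemma setOf_mul_mul_right (hI : IsHyperideal I) (c : R) :
    IsHyperideal {x | ∀ s, x * s * c ∈ I} := by
  refine ⟨⟨0, fun s => by simpa only [zero_mul'] using hI.zero_mem⟩, ?_, fun x hx r => ⟨?_, ?_⟩⟩
  · intro x hx y hy z hz s
    exact hI.2.1 _ (hx s) _ (hy s) (by simpa only [mul_assoc'] using mul_mem_hadd_right (s * c) hz)
  · intro s
    simpa only [mul_assoc'] using (hI.2.2 _ (hx s) r).1
  · intro s
    simpa only [mul_assoc'] using hx (r * s)

end IsHyperideal

lemma mul_mem_hProd {H K : Set R} {x y : R} (hx : x ∈ H) (hy : y ∈ K) : x * y ∈ hProd H K := by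
  simp only [hProd, Set.mem_iUnion]
  refine ⟨[(x, y)], List.cons_ne_nil _ _, by simp [hx, hy], ?_⟩
  simp [hSum, hAddSet, hadd_zero]

lemma isHyperideal_genHyperideal (a : R) : IsHyperideal (genHyperideal a) := by
  refine ⟨⟨a, Set.mem_sInter.2 fun J hJ => hJ.2⟩, ?_, fun x hx r => ⟨?_, ?_⟩⟩
  · intro x hx y hy z hz
    exact Set.mem_sInter.2 fun J hJ =>
      hJ.1.2.1 x (Set.mem_sInter.1 hx J hJ) y (Set.mem_sInter.1 hy J hJ) hz
  · exact Set.mem_sInter.2 fun J hJ => (hJ.1.2.2 x (Set.mem_sInter.1 hx J hJ) r).1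
  · exact Set.mem_sInter.2 fun J hJ => (hJ.1.2.2 x (Set.mem_sInter.1 hx J hJ) r).2

lemma mem_genHyperideal_self (a : R) : a ∈ genHyperideal a :=
  Set.mem_sInter.2 fun _ hJ => hJ.2

lemma genHyperideal_subset {a : R} {J : Set R} (hJ : IsHyperideal J) (ha : a ∈ J) :
    genHyperideal a ⊆ J :=
  Set.sInter_subset_of_mem ⟨hJ, ha⟩

lemma hProd_genHyperideal_self_subset {one : R} (hone : ∀ x : R, x * one = x) {I : Set R}
    (hI : IsHyperideal I) {a : R} (ha : ∀ r, a * r * a ∈ I) :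
    hProd (genHyperideal a) (genHyperideal a) ⊆ I := by
  refine hI.hProd_subset fun x hx y hy => ?_
  have hay : ∀ s, a * s * y ∈ I := genHyperideal_subset (hI.setOf_mul_mul_left a) ha hy
  have hxy : ∀ s, x * s * y ∈ I := genHyperideal_subset (hI.setOf_mul_mul_right y) hay hx
  simpa only [hone] using hxy one

end Semihyperring

/-- a hyperideal of a semihyperring with identity is semiprime iff
`{a·r·a : r ∈ R} ⊆ I ↔ a ∈ I` for all `a`. -/
theorem semiprime_iff {R : Type*} [Semihyperring R]
    (one : R) (hone : ∀ x : R, one * x = x ∧ x * one = x)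
    (I : Set R) (hI : IsHyperideal I) :
    IsSemiprimeHyperideal I ↔ ∀ a : R, (∀ r : R, a * r * a ∈ I) ↔ a ∈ I := by
  constructor
  · rintro ⟨-, hsemiprime⟩ a
    refine ⟨fun ha => ?_, fun ha r => (hI.2.2 _ (hI.2.2 a ha r).2 a).2⟩
    exact hsemiprime _ (isHyperideal_genHyperideal a)
      (hProd_genHyperideal_self_subset (fun x => (hone x).2) hI ha) (mem_genHyperideal_self a)
  · intro h
    refine ⟨hI, fun H hH hHH x hx => (h x).1 fun r => ?_⟩
    rw [mul_assoc']
    exact hHH (mul_mem_hProd hx (hH.2.2 x hx r).1)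
end
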